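/- Let Γ be a self-adjoint, positive, unbounded operator with discrete spectrum on a separable Hilbert space H, and let L be a self-adjoint operator satisfying ‖Lψ‖ ≤ C‖ψ‖_1 and ‖e^{iLt}ψ‖_1 ≤ B(t)‖ψ‖_1 for all ψ ∈ H^1(Γ) and t > 0, with B ∈ L²_loc[0,∞). Let φ^0(t) and φ^ε(t) solve (φ^0)' = iLφ^0 and (φ^ε)' = (iL − εΓ)φ^ε respectively, with common initial datum φ_0 ∈ H^1(Γ). Then (d/dt)‖φ^ε(t) − φ^0(t)‖² ≤ (ε/2)‖φ^0(t)‖_1² ≤ (ε/2) B(t)² ‖φ_0‖_1². -/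

import Mathlib

open MeasureTheory Filter Set
open scoped InnerProductSpace ENNReal

noncomputable section

variable {H : Type*} [NormedAddCommGroup H] [InnerProductSpace ℂ H] [CompleteSpace H]

/-- The spectral data of a self-adjoint, positive, unbounded operator `Γ` with discrete
spectrum on a separable Hilbert space `H`: the eigenvalues `0 < λ 0 ≤ λ 1 ≤ ⋯ → ∞`
together with an orthonormal (Hilbert) basis of corresponding eigenvectors. -/
structure DiscreteSpectralOp (H : Type*) [NormedAddCommGroup H]
    [InnerProductSpace ℂ H] [CompleteSpace H] where
  /-- the orthonormal eigenbasis of `Γ` -/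
  e : HilbertBasis ℕ ℂ H
  /-- the eigenvalues of `Γ` -/
  lam : ℕ → ℝ
  lam_pos : ∀ n, 0 < lam n
  lam_mono : Monotone lam
  lam_top : Tendsto lam atTop atTop

namespace DiscreteSpectralOp

variable (Γ : DiscreteSpectralOp H)

/-- the coefficients of `ψ` in the eigenbasis of `Γ` -/
def coeff (ψ : H) (n : ℕ) : ℂ := Γ.e.repr ψ n

/-- membership in the (homogeneous) Sobolev space `H^m(Γ)`:
`∑ λ_n^m |c_n|² < ∞` -/
def MemHs (m : ℝ) (ψ : H) : Prop :=
  Summable fun n => Γ.lam n ^ m * ‖Γ.coeff ψ n‖ ^ 2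

/-- the Sobolev norm `‖ψ‖_{H^m(Γ)} = (∑ λ_n^m |c_n|²)^{1/2}` -/
def snorm (m : ℝ) (ψ : H) : ℝ :=
  Real.sqrt (∑' n, Γ.lam n ^ m * ‖Γ.coeff ψ n‖ ^ 2)

/-- the operator `Γ` itself, `Γψ = ∑ λ_n c_n e_n` (junk value off its domain `H²(Γ)`) -/
def apply (ψ : H) : H := ∑' n, ((Γ.lam n : ℂ) * Γ.coeff ψ n) • (Γ.e n : H)

/-- the orthogonal projection `P_N` onto the span of the first `N` eigenvectors of `Γ` -/
def projN (N : ℕ) (ψ : H) : H := ∑ n ∈ Finset.range N, Γ.coeff ψ n • (Γ.e n : H)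

end DiscreteSpectralOp

/-- A strongly continuous one-parameter unitary group `t ↦ U t = e^{iLt}` on `H`
(by Stone's theorem such groups correspond exactly to self-adjoint generators `L`). -/
structure UnitaryGroup (H : Type*) [NormedAddCommGroup H] [InnerProductSpace ℂ H]
    [CompleteSpace H] where
  /-- the unitary operator `e^{iLt}` -/
  U : ℝ → (H ≃ₗᵢ[ℂ] H)
  map_zero : ∀ ψ, U 0 ψ = ψ
  map_add : ∀ s t ψ, U (s + t) ψ = U s (U t ψ)
  strong_cont : ∀ ψ, Continuous fun t => U t ψ

namespace UnitaryGroup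

variable (G : UnitaryGroup H)

/-- `ψ` is an eigenvector of the self-adjoint generator `L` of the group `U t = e^{iLt}`,
i.e. `ψ ≠ 0` and `e^{iLt} ψ = e^{iEt} ψ` for some real eigenvalue `E`. -/
def IsEigenvector (ψ : H) : Prop :=
  ψ ≠ 0 ∧ ∃ E : ℝ, ∀ t : ℝ, G.U t ψ = Complex.exp (Complex.I * E * t) • ψ

/-- the pure point spectral subspace of the generator of the group -/
def ppSpace : Submodule ℂ H :=
  (Submodule.span ℂ {ψ : H | G.IsEigenvector ψ}).topologicalClosure

/-- the spectral projection `P_p` onto the pure point spectral subspace -/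
def Pp (ψ : H) : H :=
  haveI : CompleteSpace (G.ppSpace : Submodule ℂ H) :=
    (Submodule.isClosed_topologicalClosure _).completeSpace_coe
  (Submodule.orthogonalProjectionOnto G.ppSpace ψ : H)

/-- the spectral projection `P_c` onto the continuous spectral subspace -/
def Pc (ψ : H) : H := ψ - G.Pp ψ

end UnitaryGroup

/-- `φ` solves the damped equation `(φ^ε)'(t) = (iL − εΓ)φ^ε(t)`, `φ^ε(0) = φ₀`. -/
def IsDampedSolution (Γ : DiscreteSpectralOp H) (L : H →ₗ[ℂ] H) (ε : ℝ) (φ₀ : H)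
    (φ : ℝ → H) : Prop :=
  φ 0 = φ₀ ∧ ContinuousOn φ (Ici 0) ∧
    ∀ t : ℝ, 0 < t → Γ.MemHs 2 (φ t) ∧
      HasDerivAt φ (Complex.I • L (φ t) - (ε : ℂ) • Γ.apply (φ t)) t

/-- `φ` solves the free equation `(φ⁰)'(t) = iLφ⁰(t)`, `φ⁰(0) = φ₀`. -/
def IsFreeSolution (Γ : DiscreteSpectralOp H) (L : H →ₗ[ℂ] H) (φ₀ : H)
    (φ : ℝ → H) : Prop :=
  φ 0 = φ₀ ∧ ∀ t : ℝ, Γ.MemHs 1 (φ t) ∧ HasDerivAt φ (Complex.I • L (φ t)) t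

/-!
Write `w = φ^ε - φ⁰`, so that `w' = iLw - εΓφ^ε`. Symmetry of `L` makes `Re ⟪w, iLw⟫` vanish,
hence `(d/dt)‖w‖² = -2ε Re ⟪φ^ε - φ⁰, Γφ^ε⟫`. In the eigenbasis of `Γ`, with `x, y` the
coefficients of `φ⁰, φ^ε`, this is `ε ∑ λₙ (2 Re (x̄ₙ yₙ) - 2|yₙ|²)`, and completing the square
bounds each term by `λₙ |xₙ|² / 2`. For the second inequality, `φ⁰(t) = e^{iLt} φ₀`: again by
symmetry of `L`, the difference of the two has constant norm, and it vanishes at `t = 0`.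
-/

section

variable {E : Type*} [NormedAddCommGroup E] [InnerProductSpace ℂ E]

lemma re_inner_I_smul_eq_zero {ψ χ : E} (h : ⟪χ, ψ⟫_ℂ = ⟪ψ, χ⟫_ℂ) :
    (⟪ψ, Complex.I • χ⟫_ℂ).re = 0 := by
  have him : (⟪ψ, χ⟫_ℂ).im = 0 := Complex.conj_eq_iff_im.mp (by rw [inner_conj_symm, h])
  simp [him]

lemma hasDerivAt_norm_sq {f : ℝ → E} {f' : E} {x : ℝ} (hf : HasDerivAt f f' x) :
    HasDerivAt (fun s => ‖f s‖ ^ 2) (2 * (⟪f x, f'⟫_ℂ).re) x :=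
  letI := InnerProductSpace.complexToReal (G := E)
  hf.norm_sq

end

lemma Complex.neg_two_mul_re_conj_sub_mul_le (x y : ℂ) :
    -(2 * (starRingEnd ℂ (y - x) * y).re) ≤ ‖x‖ ^ 2 / 2 := by
  rw [Complex.sq_norm, Complex.normSq_apply]
  simp only [map_sub, sub_mul, Complex.sub_re, Complex.mul_re, Complex.conj_re, Complex.conj_im]
  nlinarith [sq_nonneg (x.re - 2 * y.re), sq_nonneg (x.im - 2 * y.im)]

namespace DiscreteSpectralOp

variable (Γ : DiscreteSpectralOp H)

lemma coeff_sub (ψ χ : H) (n : ℕ) : Γ.coeff (ψ - χ) n = Γ.coeff ψ n - Γ.coeff χ n := by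
  simp [coeff]

lemma memHs_one_iff {ψ : H} :
    Γ.MemHs 1 ψ ↔ Summable fun n => Γ.lam n * ‖Γ.coeff ψ n‖ ^ 2 := by
  simp only [MemHs, Real.rpow_one]

lemma snorm_nonneg (m : ℝ) (ψ : H) : 0 ≤ Γ.snorm m ψ := Real.sqrt_nonneg _

lemma snorm_one_sq (ψ : H) : Γ.snorm 1 ψ ^ 2 = ∑' n, Γ.lam n * ‖Γ.coeff ψ n‖ ^ 2 := by
  simp only [snorm, Real.rpow_one]
  exact Real.sq_sqrt (tsum_nonneg fun n => mul_nonneg (Γ.lam_pos n).le (sq_nonneg _))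

variable {Γ}

lemma MemHs.sub {m : ℝ} {ψ χ : H} (hψ : Γ.MemHs m ψ) (hχ : Γ.MemHs m χ) :
    Γ.MemHs m (ψ - χ) := by
  refine .of_nonneg_of_le (fun n => mul_nonneg (Real.rpow_nonneg (Γ.lam_pos n).le m)
    (sq_nonneg _)) (fun n => ?_) ((hψ.add hχ).mul_left 2)
  have hsq : ‖Γ.coeff ψ n - Γ.coeff χ n‖ ^ 2 ≤ 2 * (‖Γ.coeff ψ n‖ ^ 2 + ‖Γ.coeff χ n‖ ^ 2) :=
    (pow_le_pow_left₀ (norm_nonneg _) (norm_sub_le _ _) 2).trans add_sq_le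
  rw [coeff_sub]
  calc Γ.lam n ^ m * ‖Γ.coeff ψ n - Γ.coeff χ n‖ ^ 2
      ≤ Γ.lam n ^ m * (2 * (‖Γ.coeff ψ n‖ ^ 2 + ‖Γ.coeff χ n‖ ^ 2)) := by
        gcongr
        exact Real.rpow_nonneg (Γ.lam_pos n).le m
    _ = 2 * (Γ.lam n ^ m * ‖Γ.coeff ψ n‖ ^ 2 + Γ.lam n ^ m * ‖Γ.coeff χ n‖ ^ 2) := by ring

lemma MemHs.one_of_two {ψ : H} (h : Γ.MemHs 2 ψ) : Γ.MemHs 1 ψ := by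
  rw [memHs_one_iff]
  refine .of_nonneg_of_le (fun n => mul_nonneg (Γ.lam_pos n).le (sq_nonneg _))
    (fun n => ?_) (h.mul_left (Γ.lam 0)⁻¹)
  have hle : Γ.lam 0 ≤ Γ.lam n := Γ.lam_mono (Nat.zero_le n)
  rw [Real.rpow_two, inv_mul_eq_div, le_div_iff₀ (Γ.lam_pos 0)]
  nlinarith [mul_nonneg (mul_nonneg (sub_nonneg.2 hle) (Γ.lam_pos n).le)
    (sq_nonneg ‖Γ.coeff ψ n‖)]

lemma summable_apply_terms {χ : H} (h : Γ.MemHs 2 χ) :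
    Summable fun n => ((Γ.lam n : ℂ) * Γ.coeff χ n) • (Γ.e n : H) := by
  refine (Γ.e.orthonormal.orthogonalFamily.summable_iff_norm_sq_summable
    (fun n => (Γ.lam n : ℂ) * Γ.coeff χ n)).2 (h.congr fun n => ?_)
  rw [norm_mul, mul_pow, Real.rpow_two, Complex.norm_real, Real.norm_of_nonneg (Γ.lam_pos n).le]

lemma summable_lam_mul_conj_coeff_mul_coeff {ψ χ : H} (hψ : Γ.MemHs 1 ψ) (hχ : Γ.MemHs 1 χ) :
    Summable fun n => (Γ.lam n : ℂ) * (starRingEnd ℂ (Γ.coeff ψ n) * Γ.coeff χ n) := by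
  rw [memHs_one_iff] at hψ hχ
  refine .of_norm_bounded ((hψ.add hχ).mul_left (1 / 2)) fun n => ?_
  have := two_mul_le_add_sq ‖Γ.coeff ψ n‖ ‖Γ.coeff χ n‖
  rw [norm_mul, norm_mul, RCLike.norm_conj, Complex.norm_real,
    Real.norm_of_nonneg (Γ.lam_pos n).le]
  nlinarith [Γ.lam_pos n]

lemma re_inner_apply {ψ χ : H} (hψ : Γ.MemHs 1 ψ) (hχ : Γ.MemHs 2 χ) :
    (⟪ψ, Γ.apply χ⟫_ℂ).re
      = ∑' n, Γ.lam n * (starRingEnd ℂ (Γ.coeff ψ n) * Γ.coeff χ n).re := by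
  have hinner : ⟪ψ, Γ.apply χ⟫_ℂ
      = ∑' n, (Γ.lam n : ℂ) * (starRingEnd ℂ (Γ.coeff ψ n) * Γ.coeff χ n) := by
    rw [apply, ← innerSL_apply_apply ℂ, (innerSL ℂ ψ).map_tsum (summable_apply_terms hχ)]
    refine tsum_congr fun n => ?_
    simp only [innerSL_apply_apply, inner_smul_right, coeff, HilbertBasis.repr_apply_apply,
      inner_conj_symm]
    ring
  rw [hinner, Complex.re_tsum (summable_lam_mul_conj_coeff_mul_coeff hψ hχ.one_of_two)]
  simp only [Complex.re_ofReal_mul]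

lemma neg_two_mul_re_inner_sub_apply_le {χ ψ : H} (hχ : Γ.MemHs 2 χ) (hψ : Γ.MemHs 1 ψ) :
    -(2 * (⟪χ - ψ, Γ.apply χ⟫_ℂ).re) ≤ Γ.snorm 1 ψ ^ 2 / 2 := by
  have hsum := summable_lam_mul_conj_coeff_mul_coeff (hχ.one_of_two.sub hψ) hχ.one_of_two
  rw [re_inner_apply (hχ.one_of_two.sub hψ) hχ, snorm_one_sq, ← tsum_mul_left, ← tsum_neg,
    ← tsum_div_const]
  refine Summable.tsum_le_tsum (fun n => ?_) ?_ ((memHs_one_iff Γ).1 hψ |>.div_const 2)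
  · calc -(2 * (Γ.lam n * (starRingEnd ℂ (Γ.coeff (χ - ψ) n) * Γ.coeff χ n).re))
        = Γ.lam n * -(2 * (starRingEnd ℂ (Γ.coeff χ n - Γ.coeff ψ n) * Γ.coeff χ n).re) := by
          rw [coeff_sub]; ring
      _ ≤ Γ.lam n * (‖Γ.coeff ψ n‖ ^ 2 / 2) := by
          gcongr
          · exact (Γ.lam_pos n).le
          · exact Complex.neg_two_mul_re_conj_sub_mul_le _ _
      _ = Γ.lam n * ‖Γ.coeff ψ n‖ ^ 2 / 2 := by ring
  · simpa only [Complex.reCLM_apply, Complex.re_ofReal_mul] using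
      ((Complex.reCLM.summable hsum).mul_left 2).neg

end DiscreteSpectralOp

namespace UnitaryGroup

variable (G : UnitaryGroup H)

lemma hasDerivAt_of_hasDerivAt_zero {ψ v : H} {s : ℝ}
    (h : HasDerivAt (fun t => G.U t (G.U s ψ)) v 0) : HasDerivAt (fun t => G.U t ψ) v s := by
  have h' : HasDerivAt (fun t => G.U t (G.U s ψ)) v (s - s) := by rwa [sub_self]
  simpa only [← G.map_add, sub_add_cancel] using h'.comp_sub_const s s

end UnitaryGroup

lemma IsFreeSolution.eq_unitaryGroup {Γ : DiscreteSpectralOp H} {L : H →ₗ[ℂ] H}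
    {G : UnitaryGroup H} (hsym : ∀ ψ χ : H, Γ.MemHs 1 ψ → Γ.MemHs 1 χ → ⟪L ψ, χ⟫_ℂ = ⟪ψ, L χ⟫_ℂ)
    (hgen : ∀ ψ : H, Γ.MemHs 1 ψ → HasDerivAt (fun t => G.U t ψ) (Complex.I • L ψ) 0)
    {φ₀ : H} (hφ₀ : Γ.MemHs 1 φ₀) (hU : ∀ t, 0 < t → Γ.MemHs 1 (G.U t φ₀))
    {φ : ℝ → H} (hφ : IsFreeSolution Γ L φ₀ φ) {t : ℝ} (ht : 0 ≤ t) : φ t = G.U t φ₀ := by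
  have hU' : ∀ s, 0 ≤ s → Γ.MemHs 1 (G.U s φ₀) := fun s hs => by
    rcases hs.eq_or_lt with rfl | hs
    · rwa [G.map_zero]
    · exact hU s hs
  set d : ℝ → H := fun s => φ s - G.U s φ₀
  have hd : ∀ s, 0 ≤ s → HasDerivAt (fun r => ‖d r‖ ^ 2) 0 s := by
    intro s hs
    have hds : HasDerivAt d (Complex.I • L (d s)) s := by
      have := (hφ.2 s).2.sub (G.hasDerivAt_of_hasDerivAt_zero (hgen _ (hU' s hs)))
      rwa [← smul_sub, ← map_sub] at this
    have hmem : Γ.MemHs 1 (d s) := (hφ.2 s).1.sub (hU' s hs)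
    have := hasDerivAt_norm_sq hds
    rwa [re_inner_I_smul_eq_zero (hsym _ _ hmem hmem), mul_zero] at this
  have hconst := constant_of_has_deriv_right_zero (f := fun r => ‖d r‖ ^ 2) (a := 0) (b := t)
    (fun s hs => (hd s hs.1).continuousAt.continuousWithinAt)
    (fun s hs => (hd s hs.1).hasDerivWithinAt) t (right_mem_Icc.2 ht)
  simpa [d, hφ.1, G.map_zero, sub_eq_zero] using hconst

theorem approximation_lemma_general
    (Γ : DiscreteSpectralOp H) (L : H →ₗ[ℂ] H) (G : UnitaryGroup H)
    (hsym : ∀ ψ χ : H, Γ.MemHs 1 ψ → Γ.MemHs 1 χ → ⟪L ψ, χ⟫_ℂ = ⟪ψ, L χ⟫_ℂ)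
    (hgen : ∀ ψ : H, Γ.MemHs 1 ψ →
      HasDerivAt (fun t => G.U t ψ) (Complex.I • L ψ) 0)
    (B : ℝ → ℝ)
    (hB : ∀ ψ : H, Γ.MemHs 1 ψ → ∀ t : ℝ, 0 < t →
      Γ.MemHs 1 (G.U t ψ) ∧ Γ.snorm 1 (G.U t ψ) ≤ B t * Γ.snorm 1 ψ)
    (ε : ℝ) (hε : 0 < ε) (φ₀ : H) (hφ₀ : Γ.MemHs 1 φ₀)
    (φe : ℝ → H) (hφe : IsDampedSolution Γ L ε φ₀ φe)
    (φ0 : ℝ → H) (hφ0 : IsFreeSolution Γ L φ₀ φ0) :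
    ∀ t : ℝ, 0 < t → ∃ D : ℝ,
      HasDerivAt (fun s => ‖φe s - φ0 s‖ ^ 2) D t ∧
      D ≤ ε / 2 * Γ.snorm 1 (φ0 t) ^ 2 ∧
      ε / 2 * Γ.snorm 1 (φ0 t) ^ 2 ≤ ε / 2 * (B t) ^ 2 * Γ.snorm 1 φ₀ ^ 2 := by
  intro t ht
  obtain ⟨hφe₂, hφe'⟩ := hφe.2.2 t ht
  obtain ⟨hφ0₁, hφ0'⟩ := hφ0.2 t
  have hw : Γ.MemHs 1 (φe t - φ0 t) := hφe₂.one_of_two.sub hφ0₁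
  have hw' : HasDerivAt (φe - φ0)
      (Complex.I • L (φe t - φ0 t) - (ε : ℂ) • Γ.apply (φe t)) t := by
    convert hφe'.sub hφ0' using 1
    rw [map_sub, smul_sub]
    abel
  refine ⟨_, hasDerivAt_norm_sq hw', ?_, ?_⟩
  · rw [inner_sub_right, Complex.sub_re, re_inner_I_smul_eq_zero (hsym _ _ hw hw),
      inner_smul_right, Complex.re_ofReal_mul]
    have := mul_le_mul_of_nonneg_left
      (DiscreteSpectralOp.neg_two_mul_re_inner_sub_apply_le hφe₂ hφ0₁) hε.le
    linarith
  · rw [hφ0.eq_unitaryGroup hsym hgen hφ₀ (fun s hs => (hB φ₀ hφ₀ s hs).1) ht.le, mul_assoc,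
      ← mul_pow]
    gcongr
    · exact Γ.snorm_nonneg 1 _
    · exact (hB φ₀ hφ₀ t ht).2

/-- **Lemma 2.5.**  Under conditions (2.1) and (2.2), if `φ⁰` and `φ^ε` solve
`(φ⁰)' = iLφ⁰` and `(φ^ε)' = (iL − εΓ)φ^ε` with the same initial datum
`φ₀ ∈ H¹(Γ)`, then for `t > 0`
`(d/dt)‖φ^ε(t) − φ⁰(t)‖² ≤ (ε/2)‖φ⁰(t)‖₁² ≤ (ε/2)B(t)²‖φ₀‖₁²`. -/
theorem approximation_lemma
    (Γ : DiscreteSpectralOp H) (L : H →ₗ[ℂ] H) (G : UnitaryGroup H)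
    (hsym : ∀ ψ χ : H, Γ.MemHs 1 ψ → Γ.MemHs 1 χ → ⟪L ψ, χ⟫_ℂ = ⟪ψ, L χ⟫_ℂ)
    (hgen : ∀ ψ : H, Γ.MemHs 1 ψ →
      HasDerivAt (fun t => G.U t ψ) (Complex.I • L ψ) 0)
    (C : ℝ) (hL : ∀ ψ : H, Γ.MemHs 1 ψ → ‖L ψ‖ ≤ C * Γ.snorm 1 ψ)
    (B : ℝ → ℝ) (hBloc : ∀ T : ℝ, 0 < T → IntegrableOn (fun t => (B t) ^ 2) (Ioc 0 T))
    (hB : ∀ ψ : H, Γ.MemHs 1 ψ → ∀ t : ℝ, 0 < t →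
      Γ.MemHs 1 (G.U t ψ) ∧ Γ.snorm 1 (G.U t ψ) ≤ B t * Γ.snorm 1 ψ)
    (ε : ℝ) (hε : 0 < ε) (φ₀ : H) (hφ₀ : Γ.MemHs 1 φ₀)
    (φe : ℝ → H) (hφe : IsDampedSolution Γ L ε φ₀ φe)
    (φ0 : ℝ → H) (hφ0 : IsFreeSolution Γ L φ₀ φ0) :
    ∀ t : ℝ, 0 < t → ∃ D : ℝ,
      HasDerivAt (fun s => ‖φe s - φ0 s‖ ^ 2) D t ∧
      D ≤ ε / 2 * Γ.snorm 1 (φ0 t) ^ 2 ∧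
      ε / 2 * Γ.snorm 1 (φ0 t) ^ 2 ≤ ε / 2 * (B t) ^ 2 * Γ.snorm 1 φ₀ ^ 2 :=
  approximation_lemma_general Γ L G hsym hgen B hB ε hε φ₀ hφ₀ φe hφe φ0 hφ0
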